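/- For every natural number k, L(binom(x−1, k)) = (−1)^k (k+1)·(k+1)! / (k+3)!, where L is applied to the binomial polynomial binom(x−1,k) of degree k. -/

import Mathlib

open Finset Polynomial

/-- The binomial polynomial `binom(x−1,k) = (x−1)(x−2)⋯(x−k)/k!` in `ℚ[X]`. -/
noncomputable def binomXm1 (k : ℕ) : Polynomial ℚ :=
  ((k.factorial : ℚ))⁻¹ • ∏ i ∈ range k, (X - C ((i : ℚ) + 1))

/-- The linear functional determined by `L(x^j) = (−1)^j B_{j+2}`
(Bernoulli numbers with the convention `B₁ = −1/2`). -/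
noncomputable def L (p : Polynomial ℚ) : ℚ :=
  p.sum fun j a => a * (-1) ^ j * _root_.bernoulli (j + 2)

noncomputable def Lam (p : Polynomial ℚ) : ℚ :=
  p.sum fun j a => a * bernoulli' j

lemma Lam_eq_range (p : Polynomial ℚ) (n : ℕ) (h : p.natDegree < n) :
    Lam p = ∑ j ∈ range n, p.coeff j * bernoulli' j :=
  sum_over_range' p (fun _ => by ring) n h

lemma Lam_add (p q : Polynomial ℚ) : Lam (p + q) = Lam p + Lam q :=
  sum_add_index p q _ (fun _ => by ring) (fun _ _ _ => by ring)

lemma Lam_C_mul (a : ℚ) (p : Polynomial ℚ) : Lam (C a * p) = a * Lam p := by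
  have : C a * p = a • p := (smul_eq_C_mul a).symm
  rw [this, Lam, sum_smul_index p a _ (fun _ => by ring)]
  rw [Lam, Polynomial.sum_def, Polynomial.sum_def, Finset.mul_sum]
  exact Finset.sum_congr rfl fun j _ => by ring

lemma Lam_sub (p q : Polynomial ℚ) : Lam (p - q) = Lam p - Lam q := by
  have h := Lam_add (p - q) q
  simp at h
  linarith

lemma Lam_X_pow (n : ℕ) : Lam (X ^ n : Polynomial ℚ) = bernoulli' n := by
  rw [Lam, X_pow_eq_monomial, sum_monomial_index _ _ (by ring)]
  ring

lemma Lam_key (q : Polynomial ℚ) : Lam (q.comp (X + 1) - q) = q.derivative.eval 1 := by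
  induction q using Polynomial.induction_on' with
  | add p q hp hq =>
      have : (p + q).comp (X + 1) - (p + q) = (p.comp (X + 1) - p) + (q.comp (X + 1) - q) := by
        rw [add_comp]; ring
      rw [this, Lam_add, hp, hq, derivative_add, eval_add]
  | monomial n a =>
      rw [← C_mul_X_pow_eq_monomial, mul_comp, C_comp, pow_comp, X_comp, ← mul_sub, Lam_C_mul]
      have h1 : Lam (((X + 1) ^ n : Polynomial ℚ)) = ∑ j ∈ range (n + 1),
          (n.choose j : ℚ) * bernoulli' j := by
        rw [Lam_eq_range _ (n + 1)]
        · exact Finset.sum_congr rfl fun j _ => by rw [coeff_X_add_one_pow]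
        · calc ((X + 1 : Polynomial ℚ) ^ n).natDegree = n * (X + 1 : Polynomial ℚ).natDegree :=
                natDegree_pow _ _
            _ ≤ n * 1 := by
                have : (X + 1 : Polynomial ℚ) = X + C 1 := by simp
                rw [this, natDegree_X_add_C]
            _ < n + 1 := by omega
      rw [Lam_sub, h1, Lam_X_pow, Finset.sum_range_succ, Nat.choose_self]
      rw [sum_bernoulli']
      have : derivative (C a * X ^ n) = C a * (C (n : ℚ) * X ^ (n - 1)) := by
        simp [derivative_C_mul, derivative_X_pow, mul_assoc]
      rw [this]
      simp

noncomputable def P (m : ℕ) : Polynomial ℚ := ∏ i ∈ range m, (X - C ((i : ℚ) + 1))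

lemma P_succ (m : ℕ) : P (m + 1) = P m * (X - C ((m : ℚ) + 1)) := by
  simp only [P]
  rw [Finset.prod_range_succ]

lemma P_comp (m : ℕ) : (P (m + 1)).comp (X + 1) - P (m + 1) = C ((m : ℚ) + 1) * P m := by
  have h1 : (P (m + 1)).comp (X + 1) = ∏ i ∈ range (m + 1), (X - C (i : ℚ)) := by
    rw [P, Polynomial.prod_comp]
    exact Finset.prod_congr rfl fun i _ => by rw [sub_comp, X_comp, C_comp, map_add, map_one]; ring
  have h2 : ∏ i ∈ range (m + 1), (X - C (i : ℚ)) = P m * X := by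
    rw [Finset.prod_range_succ', P]
    simp only [Nat.cast_add, Nat.cast_one, Nat.cast_zero, map_zero, sub_zero]
  rw [h1, h2, P_succ]
  ring

lemma prodneg (m : ℕ) : ∏ i ∈ range m, (-((i : ℚ) + 1)) = (-1) ^ m * m.factorial := by
  induction m with
  | zero => simp
  | succ m ih => rw [Finset.prod_range_succ, ih, Nat.factorial_succ]; push_cast; ring

lemma P_deriv (m : ℕ) : (P (m + 1)).derivative.eval 1 = (-1) ^ m * m.factorial := by
  have h : P (m + 1) = (∏ i ∈ range m, (X - C ((i : ℚ) + 1 + 1))) * (X - C 1) := by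
    rw [P, Finset.prod_range_succ']
    simp only [Nat.cast_add, Nat.cast_one, Nat.cast_zero, zero_add]
  rw [h, derivative_mul]
  simp [eval_prod]
  rw [← prodneg m]
  exact Finset.prod_congr rfl fun i _ => by ring

lemma Lam_P (m : ℕ) : Lam (P m) = (-1) ^ m * m.factorial / (m + 1) := by
  have key := Lam_key (P (m + 1))
  rw [P_comp, P_deriv, Lam_C_mul] at key
  have hm : ((m : ℚ) + 1) ≠ 0 := by positivity
  field_simp at key ⊢
  linarith [key]

lemma L_eq (p : Polynomial ℚ) : L p = Lam (X ^ 2 * p) := by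
  have hdeg : (X ^ 2 * p).natDegree < p.natDegree + 3 := by
    calc (X ^ 2 * p).natDegree ≤ (X ^ 2 : Polynomial ℚ).natDegree + p.natDegree :=
          natDegree_mul_le
      _ = 2 + p.natDegree := by rw [natDegree_X_pow]
      _ < p.natDegree + 3 := by omega
  have hc : ∀ j, ((X : Polynomial ℚ) ^ 2 * p).coeff (j + 1 + 1) = p.coeff j := fun j => by
    simpa [show j + 2 = j + 1 + 1 from rfl] using coeff_X_pow_mul p 2 j
  have hc0 : ((X : Polynomial ℚ) ^ 2 * p).coeff 0 = 0 := by simp [coeff_X_pow_mul']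
  have hc1 : ((X : Polynomial ℚ) ^ 2 * p).coeff (0 + 1) = 0 := by simp [coeff_X_pow_mul']
  rw [L, sum_over_range' p (fun _ => by ring) (p.natDegree + 1) (lt_add_one _)]
  rw [Lam_eq_range _ (p.natDegree + 3) hdeg]
  conv_rhs => rw [show p.natDegree + 3 = p.natDegree + 1 + 1 + 1 from rfl,
    Finset.sum_range_succ', Finset.sum_range_succ']
  rw [hc0, hc1, zero_mul, zero_mul, add_zero, add_zero]
  refine Finset.sum_congr rfl fun j _ => ?_
  rw [hc j]
  rw [show (_root_.bernoulli (j + 2)) = (-1) ^ (j + 2) * bernoulli' (j + 2) from rfl]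
  have h1 : ((-1 : ℚ)) ^ j * (-1) ^ (j + 2) = 1 := by
    rw [← pow_add, show j + (j + 2) = 2 * (j + 1) from by ring, pow_mul]
    norm_num
  calc p.coeff j * (-1) ^ j * ((-1) ^ (j + 2) * bernoulli' (j + 2))
      = p.coeff j * bernoulli' (j + 2) * ((-1) ^ j * (-1) ^ (j + 2)) := by ring
    _ = p.coeff j * bernoulli' (j + 1 + 1) := by rw [h1, mul_one]

lemma Pid (k : ℕ) : (X : Polynomial ℚ) ^ 2 * P k =
    P (k + 2) + C (2 * (k : ℚ) + 3) * P (k + 1) + C (((k : ℚ) + 1) ^ 2) * P k := by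
  rw [show k + 2 = k + 1 + 1 from rfl, P_succ, P_succ]
  push_cast
  simp only [map_add, map_mul, map_one, map_pow, map_ofNat]
  ring

theorem L_binomXm1 (k : ℕ) :
    L (binomXm1 k) =
      (-1) ^ k * (k + 1) * ((k + 1).factorial : ℚ) / ((k + 3).factorial : ℚ) := by
  rw [L_eq]
  have hb : binomXm1 k = ((k.factorial : ℚ))⁻¹ • P k := rfl
  have h1 : (X : Polynomial ℚ) ^ 2 * binomXm1 k =
      C ((k.factorial : ℚ))⁻¹ * (X ^ 2 * P k) := by
    rw [hb, smul_eq_C_mul]; ring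
  rw [h1, Lam_C_mul, Pid, Lam_add, Lam_add, Lam_C_mul, Lam_C_mul, Lam_P, Lam_P, Lam_P]
  have hf : ∀ n : ℕ, ((n.factorial : ℚ)) ≠ 0 := fun n => by
    exact_mod_cast Nat.cast_ne_zero.mpr n.factorial_ne_zero
  have h3 : ((k + 3).factorial : ℚ) = ((k : ℚ) + 3) * ((k : ℚ) + 2) * ((k : ℚ) + 1) *
      (k.factorial : ℚ) := by
    rw [show k + 3 = (k + 2) + 1 from rfl, Nat.factorial_succ,
      show k + 2 = (k + 1) + 1 from rfl, Nat.factorial_succ, Nat.factorial_succ]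
    push_cast; ring
  have h2 : ((k + 2).factorial : ℚ) = ((k : ℚ) + 2) * ((k : ℚ) + 1) * (k.factorial : ℚ) := by
    rw [show k + 2 = (k + 1) + 1 from rfl, Nat.factorial_succ, Nat.factorial_succ]
    push_cast; ring
  have h1' : ((k + 1).factorial : ℚ) = ((k : ℚ) + 1) * (k.factorial : ℚ) := by
    rw [Nat.factorial_succ]; push_cast; ring
  have e1 : ((-1 : ℚ)) ^ (k + 2) = (-1) ^ k := by rw [pow_add]; norm_num
  have e2 : ((-1 : ℚ)) ^ (k + 1) = -(-1) ^ k := by rw [pow_add]; norm_num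
  rw [h3, h2, h1', e1, e2]
  push_cast
  have c1 : ((k : ℚ) + 1) ≠ 0 := by positivity
  have c2 : ((k : ℚ) + 2) ≠ 0 := by positivity
  have c3 : ((k : ℚ) + 3) ≠ 0 := by positivity
  field_simp
  ring
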